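/- For every x ∈ S^n and every f ∈ H_d with ‖f‖_W = 1, one has κ̃(f,x) = 1 / dist(f, Σ_ℝ(x)), where dist(f, Σ_ℝ(x)) is the distance in the Bombieri–Weyl norm from f to the set Σ_ℝ(x) of systems having x as a multiple zero. -/

import Mathlib

open MvPolynomial Finset ENNReal

/-- Bombieri–Weyl inner product of two polynomials (intended for homogeneous
polynomials of the same degree `d`): `⟨Σ aⱼ xʲ, Σ bⱼ xʲ⟩_W = Σ aⱼ bⱼ / binom(d, j)`
where `binom(d, j) = d! / (j₀! ⋯ jₙ!)`. -/
noncomputable def bwInner {m : ℕ} (p q : MvPolynomial (Fin m) ℝ) : ℝ :=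
  ∑ j ∈ p.support ∪ q.support,
    (p.coeff j * q.coeff j) / (Nat.multinomial Finset.univ j : ℝ)

/-- Bombieri–Weyl norm of one polynomial. -/
noncomputable def bwNorm {m : ℕ} (p : MvPolynomial (Fin m) ℝ) : ℝ :=
  Real.sqrt (bwInner p p)

/-- Bombieri–Weyl norm `‖f‖_W` of a system `f = (f_1, …, f_n)`. -/
noncomputable def bwNormSys {n : ℕ} (f : Fin n → MvPolynomial (Fin (n + 1)) ℝ) : ℝ :=
  Real.sqrt (∑ i, bwInner (f i) (f i))

/-- Distance (w.r.t. the Bombieri–Weyl norm) from a system `f` to a set `S` of systems. -/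
noncomputable def bwDist {n : ℕ} (f : Fin n → MvPolynomial (Fin (n + 1)) ℝ)
    (S : Set (Fin n → MvPolynomial (Fin (n + 1)) ℝ)) : ℝ :=
  sInf ((fun g => bwNormSys (f - g)) '' S)

/-- The unit sphere `Sⁿ ⊆ ℝ^{n+1}`. -/
def unitSphere (n : ℕ) : Set (Fin (n + 1) → ℝ) := {x | ∑ k, x k ^ 2 = 1}

/-- `f` belongs to `H_d`: each component is homogeneous of degree `d i`. -/
def IsSystem {n : ℕ} (d : Fin n → ℕ) (f : Fin n → MvPolynomial (Fin (n + 1)) ℝ) : Prop :=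
  ∀ i, (f i).IsHomogeneous (d i)

/-- The derivative `Df(x)` restricted to the tangent space `T_x Sⁿ = x^⊥` is singular,
i.e. it kills some nonzero tangent vector `v`. -/
def SingularAt {n : ℕ} (f : Fin n → MvPolynomial (Fin (n + 1)) ℝ)
    (x : Fin (n + 1) → ℝ) : Prop :=
  ∃ v : Fin (n + 1) → ℝ, v ≠ 0 ∧ (∑ k, v k * x k = 0) ∧
    ∀ i, ∑ k, MvPolynomial.eval x (MvPolynomial.pderiv k (f i)) * v k = 0

/-- `Σ_ℝ(x)`: the systems in `H_d` having `x` as a multiple zero. -/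
def SigmaRx {n : ℕ} (d : Fin n → ℕ) (x : Fin (n + 1) → ℝ) :
    Set (Fin n → MvPolynomial (Fin (n + 1)) ℝ) :=
  {g | IsSystem d g ∧ (∀ i, MvPolynomial.eval x (g i) = 0) ∧ SingularAt g x}

/-- `Σ_ℝ = ⋃_{x ∈ Sⁿ} Σ_ℝ(x)`: the systems in `H_d` with a multiple zero on `Sⁿ`. -/
def SigmaR {n : ℕ} (d : Fin n → ℕ) : Set (Fin n → MvPolynomial (Fin (n + 1)) ℝ) :=
  ⋃ x ∈ unitSphere n, SigmaRx d x

/-- The smallest singular value of `diag(1/√dᵢ) · Df(x)|_{T_x Sⁿ}`, i.e.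
`inf {‖diag(1/√dᵢ)·Df(x) v‖₂ : v ⊥ x, ‖v‖₂ = 1}`.  This equals
`‖f‖_W · μ̃_norm(f,x)⁻¹`, where `μ̃_norm(f,x) = ‖f‖_W ‖(Df(x)|_{T_x Sⁿ})⁻¹ diag(√dᵢ)‖`
(spectral norm, `+∞` when `Df(x)|_{T_x Sⁿ}` is singular); it is `0` exactly
when `μ̃_norm(f,x) = +∞`. -/
noncomputable def sigmaMin {n : ℕ} (d : Fin n → ℕ)
    (f : Fin n → MvPolynomial (Fin (n + 1)) ℝ) (x : Fin (n + 1) → ℝ) : ℝ :=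
  sInf ((fun v => Real.sqrt (∑ i,
      ((∑ k, MvPolynomial.eval x (MvPolynomial.pderiv k (f i)) * v k) / Real.sqrt (d i)) ^ 2)) ''
    {v : Fin (n + 1) → ℝ | (∑ k, v k * x k = 0) ∧ ∑ k, v k ^ 2 = 1})

/-- `κ̃(f, x) = ‖f‖_W / (‖f‖_W² μ̃_norm(f,x)⁻² + ‖f(x)‖₂²)^{1/2}` as an extended
nonnegative real (value `+∞` when `f` has `x` as multiple zero), using
`‖f‖_W² μ̃_norm(f,x)⁻² = (sigmaMin d f x)²`. -/
noncomputable def kappaAt {n : ℕ} (d : Fin n → ℕ)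
    (f : Fin n → MvPolynomial (Fin (n + 1)) ℝ) (x : Fin (n + 1) → ℝ) : ℝ≥0∞ :=
  ENNReal.ofReal (bwNormSys f) /
    ENNReal.ofReal (Real.sqrt (sigmaMin d f x ^ 2 + ∑ i, (MvPolynomial.eval x (f i)) ^ 2))

/-- `κ̃(f) = max_{x ∈ Sⁿ} κ̃(f, x)`. -/
noncomputable def kappa {n : ℕ} (d : Fin n → ℕ)
    (f : Fin n → MvPolynomial (Fin (n + 1)) ℝ) : ℝ≥0∞ :=
  ⨆ x ∈ unitSphere n, kappaAt d f x

/-!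
For a unit vector `x`, a unit tangent vector `v ⊥ x` and a degree `d ≥ 1`, the polynomials
`⟨x, ·⟩ ^ d` and `⟨x, ·⟩ ^ (d - 1) * ⟨v, ·⟩` are Bombieri–Weyl reproducing kernels for
`h ↦ h x` and `h ↦ Dh(x) v / d`: this follows from the adjointness of `X k` and `∂ₖ` and Euler's
identity. They are orthogonal, of squared norms `1` and `1 / d`, so Bessel's inequality gives
`‖h‖² ≥ h(x)² + (Dh(x) v)² / d`, with equality for the projection of `h` onto their span.
If `g ∈ Σ_ℝ(x)` is singular along a unit `v`, then `f - g` has the same value at `x` and the same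
derivative along `v` as `f`, whence `‖f - g‖² ≥ ‖f(x)‖² + Σᵢ (Dfᵢ(x) v)² / dᵢ ≥ ‖f(x)‖² + σ_min²`.
Conversely, for `v` attaining `σ_min` (the tangent sphere is compact), subtracting from each `fᵢ`
its projection gives a point of `Σ_ℝ(x)` at exactly that distance.
-/

theorem Nat.sum_add_one_mul_multinomial {α : Type*} [DecidableEq α] {s : Finset α} {a : α}
    (ha : a ∈ s) (f : α → ℕ) :
    (∑ i ∈ s, f i + 1) * Nat.multinomial s f
      = (f a + 1) * Nat.multinomial s (f + Pi.single a 1) := by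
  obtain ⟨t, hat, rfl⟩ : ∃ t, a ∉ t ∧ s = insert a t :=
    ⟨s.erase a, Finset.notMem_erase a s, (Finset.insert_erase ha).symm⟩
  have hrest : ∀ i ∈ t, (f + Pi.single a 1 : α → ℕ) i = f i := fun i hi => by
    simp [(ne_of_mem_of_not_mem hi hat :)]
  rw [Nat.multinomial_insert hat, Nat.multinomial_insert hat, Nat.multinomial_congr hrest,
    Finset.sum_insert hat, Finset.sum_congr rfl hrest]
  simp only [Pi.add_apply, Pi.single_eq_same]
  rw [show f a + 1 + ∑ i ∈ t, f i = f a + ∑ i ∈ t, f i + 1 by ring, ← mul_assoc, ← mul_assoc,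
    Nat.add_one_mul_choose_eq, mul_comm (f a + 1)]

section BombieriWeyl

variable {m : ℕ}

theorem bwInner_comm (p q : MvPolynomial (Fin m) ℝ) : bwInner p q = bwInner q p := by
  rw [bwInner, bwInner, Finset.union_comm]
  exact Finset.sum_congr rfl fun j _ => by rw [mul_comm]

theorem bwInner_eq_sum_of_support_subset {p q : MvPolynomial (Fin m) ℝ}
    {s : Finset (Fin m →₀ ℕ)} (hq : q.support ⊆ s) :
    bwInner p q = ∑ j ∈ s, p.coeff j * q.coeff j / (Nat.multinomial Finset.univ j : ℝ) := by
  have hzero : ∀ t : Finset (Fin m →₀ ℕ), q.support ⊆ t → ∀ j ∈ t, j ∉ q.support →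
      p.coeff j * q.coeff j / (Nat.multinomial Finset.univ j : ℝ) = 0 := fun _ _ j _ hj => by
    rw [MvPolynomial.notMem_support_iff.mp hj, mul_zero, zero_div]
  rw [bwInner, ← Finset.sum_subset Finset.subset_union_right (hzero _ Finset.subset_union_right),
    Finset.sum_subset hq (hzero _ hq)]

theorem bwInner_add_right (p q r : MvPolynomial (Fin m) ℝ) :
    bwInner p (q + r) = bwInner p q + bwInner p r := by
  rw [bwInner_eq_sum_of_support_subset (s := q.support ∪ r.support) support_add,
    bwInner_eq_sum_of_support_subset (s := q.support ∪ r.support) Finset.subset_union_left,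
    bwInner_eq_sum_of_support_subset (s := q.support ∪ r.support) Finset.subset_union_right,
    ← Finset.sum_add_distrib]
  exact Finset.sum_congr rfl fun j _ => by rw [coeff_add]; ring

theorem bwInner_smul_right (a : ℝ) (p q : MvPolynomial (Fin m) ℝ) :
    bwInner p (a • q) = a * bwInner p q := by
  rw [bwInner_eq_sum_of_support_subset (s := q.support) support_smul,
    bwInner_eq_sum_of_support_subset subset_rfl, Finset.mul_sum]
  exact Finset.sum_congr rfl fun j _ => by rw [coeff_smul, smul_eq_mul]; ring

theorem bwInner_add_left (p q r : MvPolynomial (Fin m) ℝ) :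
    bwInner (p + q) r = bwInner p r + bwInner q r := by
  rw [bwInner_comm, bwInner_add_right, bwInner_comm r, bwInner_comm r]

theorem bwInner_smul_left (a : ℝ) (p q : MvPolynomial (Fin m) ℝ) :
    bwInner (a • p) q = a * bwInner p q := by
  rw [bwInner_comm, bwInner_smul_right, bwInner_comm q]

noncomputable def bwForm : LinearMap.BilinForm ℝ (MvPolynomial (Fin m) ℝ) :=
  LinearMap.mk₂ ℝ bwInner bwInner_add_left bwInner_smul_left bwInner_add_right bwInner_smul_right

@[simp]
theorem bwForm_apply (p q : MvPolynomial (Fin m) ℝ) : bwForm p q = bwInner p q := rfl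

theorem bwForm_isSymm : (bwForm (m := m)).IsSymm := ⟨bwInner_comm⟩

theorem bwInner_self_nonneg (p : MvPolynomial (Fin m) ℝ) : 0 ≤ bwInner p p :=
  Finset.sum_nonneg fun _ _ => div_nonneg (mul_self_nonneg _) (Nat.cast_nonneg _)

-- Coefficientwise, this is `Nat.sum_add_one_mul_multinomial`.
theorem degree_mul_bwInner_X_mul {p : MvPolynomial (Fin m) ℝ} {e : ℕ} (hp : p.IsHomogeneous e)
    (k : Fin m) (q : MvPolynomial (Fin m) ℝ) :
    (e : ℝ) * bwInner p (q * X k) = bwInner (pderiv k p) q := by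
  rw [bwInner_eq_sum_of_support_subset (support_mul_X k q).subset, Finset.sum_map,
    bwInner_eq_sum_of_support_subset subset_rfl, Finset.mul_sum]
  refine Finset.sum_congr rfl fun i _ => ?_
  simp only [addRightEmbedding_apply, coeff_mul_X, coeff_pderiv]
  set j := i + Finsupp.single k 1 with hj
  by_cases hpj : p.coeff j = 0
  · simp [hpj]
  have hdeg : ∑ l, i l + 1 = e := by
    rw [hp.degree_eq_sum_deg_support (mem_support_iff.mpr hpj), ← Finsupp.degree_apply, hj,
      map_add, Finsupp.degree_single, Finsupp.degree_eq_sum]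
  have hM : (e : ℝ) * Nat.multinomial Finset.univ i
      = (i k + 1) * Nat.multinomial Finset.univ j := by
    rw [← hdeg, hj, Finsupp.coe_add, Finsupp.single_eq_pi_single]
    exact_mod_cast Nat.sum_add_one_mul_multinomial (Finset.mem_univ k) i
  have hi0 : (Nat.multinomial Finset.univ i : ℝ) ≠ 0 :=
    Nat.cast_ne_zero.mpr (Nat.multinomial_pos _ _).ne'
  have hj0 : (Nat.multinomial Finset.univ j : ℝ) ≠ 0 :=
    Nat.cast_ne_zero.mpr (Nat.multinomial_pos _ _).ne'
  rw [mul_div_assoc', div_eq_div_iff hj0 hi0]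
  linear_combination (p.coeff j * q.coeff i) * hM
end BombieriWeyl

namespace LinearMap.BilinForm

variable {E : Type*} [AddCommGroup E] [Module ℝ E] {B : LinearMap.BilinForm ℝ E} {P Q : E}

theorem apply_smul_add_smul_self (hB : B.IsSymm) (hP : B P P = 1) (hPQ : B P Q = 0) (a b : ℝ) :
    B (a • P + b • Q) (a • P + b • Q) = a ^ 2 + b ^ 2 * B Q Q := by
  simp only [map_add, map_smul, LinearMap.add_apply, LinearMap.smul_apply, smul_eq_mul,
    hP, hPQ, hB.eq Q P]
  ring

theorem sq_apply_add_sq_apply_div_le (hB : B.IsSymm) (hB₀ : ∀ u, 0 ≤ B u u) (hP : B P P = 1)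
    (hPQ : B P Q = 0) (hQ : 0 < B Q Q) (h : E) :
    B h P ^ 2 + B h Q ^ 2 / B Q Q ≤ B h h := by
  have hproj := hB₀ (h - (B h P • P + (B h Q / B Q Q) • Q))
  simp only [map_sub, map_add, map_smul, LinearMap.sub_apply, LinearMap.add_apply,
    LinearMap.smul_apply, smul_eq_mul, hP, hPQ, hB.eq Q P, hB.eq P h, hB.eq Q h] at hproj
  field_simp at hproj ⊢
  nlinarith [hproj]

end LinearMap.BilinForm

namespace MvPolynomial

variable {σ R : Type*} [Fintype σ]

section CommSemiring

variable [CommSemiring R]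

noncomputable def linearForm (y : σ → R) : MvPolynomial σ R := ∑ k, C (y k) * X k

noncomputable def dirDeriv (p : MvPolynomial σ R) (x v : σ → R) : R :=
  ∑ k, eval x (pderiv k p) * v k

theorem eval_linearForm (y z : σ → R) : eval z (linearForm y) = ∑ k, y k * z k := by
  simp [linearForm]

theorem pderiv_linearForm (k : σ) (y : σ → R) : pderiv k (linearForm y) = C (y k) := by
  classical
  simp [linearForm, pderiv_X, Pi.single_apply]

theorem isHomogeneous_linearForm (y : σ → R) : (linearForm y).IsHomogeneous 1 :=
  IsHomogeneous.sum _ _ _ fun _ _ => isHomogeneous_C_mul_X _ _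

theorem dirDeriv_smul_right (p : MvPolynomial σ R) (x v : σ → R) (a : R) :
    dirDeriv p x (a • v) = a * dirDeriv p x v := by
  simp [dirDeriv, Finset.mul_sum, mul_left_comm]

end CommSemiring

theorem dirDeriv_sub [CommRing R] (p q : MvPolynomial σ R) (x v : σ → R) :
    dirDeriv (p - q) x v = dirDeriv p x v - dirDeriv q x v := by
  simp [dirDeriv, sub_mul]

end MvPolynomial

section Kernels

variable {m : ℕ}

noncomputable def evalKernel (x : Fin m → ℝ) (d : ℕ) : MvPolynomial (Fin m) ℝ := linearForm x ^ d

noncomputable def derivKernel (x v : Fin m → ℝ) (d : ℕ) : MvPolynomial (Fin m) ℝ :=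
  linearForm x ^ (d - 1) * linearForm v

theorem isHomogeneous_evalKernel (x : Fin m → ℝ) (d : ℕ) : (evalKernel x d).IsHomogeneous d := by
  simpa [evalKernel] using (isHomogeneous_linearForm x).pow d

theorem isHomogeneous_derivKernel (x v : Fin m → ℝ) {d : ℕ} (hd : d ≠ 0) :
    (derivKernel x v d).IsHomogeneous d := by
  simpa [derivKernel, evalKernel, Nat.sub_add_cancel (Nat.one_le_iff_ne_zero.mpr hd)] using
    (isHomogeneous_evalKernel x (d - 1)).mul (isHomogeneous_linearForm v)

theorem bwInner_mul_linearForm (p q : MvPolynomial (Fin m) ℝ) (w : Fin m → ℝ) :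
    bwInner p (q * linearForm w) = ∑ k, w k * bwInner p (q * X k) := by
  have : q * linearForm w = ∑ k, w k • (q * X k) := by
    simp only [linearForm, Finset.mul_sum, smul_eq_C_mul]
    exact Finset.sum_congr rfl fun k _ => by ring
  simp only [this, ← bwForm_apply, map_sum, map_smul, smul_eq_mul]

theorem bwInner_one (p : MvPolynomial (Fin m) ℝ) : bwInner p 1 = p.coeff 0 := by
  rw [bwInner_eq_sum_of_support_subset support_one.subset]
  simp [Nat.multinomial]

theorem bwInner_evalKernel {p : MvPolynomial (Fin m) ℝ} {e : ℕ} (hp : p.IsHomogeneous e)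
    (y : Fin m → ℝ) : bwInner p (evalKernel y e) = eval y p := by
  induction e generalizing p with
  | zero =>
    rw [← totalDegree_zero_iff_isHomogeneous, totalDegree_eq_zero_iff_eq_C] at hp
    rw [evalKernel, pow_zero, bwInner_one, hp, coeff_C, if_pos rfl, eval_C]
  | succ e ih =>
    have euler := congrArg (eval y) hp.sum_X_mul_pderiv
    simp only [map_sum, map_mul, eval_X, nsmul_eq_mul, map_natCast] at euler
    have hdiff : ((e + 1 : ℕ) : ℝ) * bwInner p (evalKernel y e * linearForm y)
        = ∑ k, y k * eval y (pderiv k p) := by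
      rw [bwInner_mul_linearForm, Finset.mul_sum]
      refine Finset.sum_congr rfl fun k _ => ?_
      rw [mul_left_comm, degree_mul_bwInner_X_mul hp, ih hp.pderiv]
    rw [euler] at hdiff
    rw [evalKernel, pow_succ]
    exact mul_left_cancel₀ (by positivity) hdiff

theorem degree_mul_bwInner_derivKernel {p : MvPolynomial (Fin m) ℝ} {d : ℕ}
    (hp : p.IsHomogeneous d) (x v : Fin m → ℝ) :
    (d : ℝ) * bwInner p (derivKernel x v d) = dirDeriv p x v := by
  simp only [derivKernel, bwInner_mul_linearForm, Finset.mul_sum, dirDeriv]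
  refine Finset.sum_congr rfl fun k _ => ?_
  rw [mul_left_comm, degree_mul_bwInner_X_mul hp, ← evalKernel, bwInner_evalKernel hp.pderiv,
    mul_comm]

theorem bwInner_derivKernel {p : MvPolynomial (Fin m) ℝ} {d : ℕ} (hd : d ≠ 0)
    (hp : p.IsHomogeneous d) (x v : Fin m → ℝ) :
    bwInner p (derivKernel x v d) = dirDeriv p x v / d := by
  rw [← degree_mul_bwInner_derivKernel hp, mul_div_cancel_left₀ _ (Nat.cast_ne_zero.mpr hd)]

end Kernels

section TangentSphere

variable {σ : Type*} [Fintype σ] {x : σ → ℝ}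

def tangentSphere (x : σ → ℝ) : Set (σ → ℝ) :=
  {v | (∑ k, v k * x k = 0) ∧ ∑ k, v k ^ 2 = 1}

theorem inv_sqrt_smul_mem_tangentSphere {u : σ → ℝ} (hu : u ≠ 0) (hux : ∑ k, u k * x k = 0) :
    (Real.sqrt (∑ k, u k ^ 2))⁻¹ • u ∈ tangentSphere x := by
  have hpos : 0 < ∑ k, u k ^ 2 := by
    obtain ⟨k, hk⟩ := Function.ne_iff.mp hu
    exact (pow_two_pos_of_ne_zero hk).trans_le
      (Finset.single_le_sum (fun l _ => sq_nonneg (u l)) (Finset.mem_univ k))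
  refine ⟨?_, ?_⟩
  · simp only [Pi.smul_apply, smul_eq_mul, mul_assoc, ← Finset.mul_sum, hux, mul_zero]
  · simp only [Pi.smul_apply, smul_eq_mul, mul_pow, ← Finset.mul_sum, inv_pow,
      Real.sq_sqrt hpos.le, inv_mul_cancel₀ hpos.ne']

-- A matrix with two equal rows `x` has a nonzero kernel vector, which is orthogonal to `x`.
theorem tangentSphere_nonempty [DecidableEq σ] (hσ : 1 < Fintype.card σ) (x : σ → ℝ) :
    (tangentSphere x).Nonempty := by
  obtain ⟨i, j, hij⟩ := Fintype.exists_pair_of_one_lt_card hσ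
  obtain ⟨u, hu, hMu⟩ := Matrix.exists_mulVec_eq_zero_iff.mpr
    (Matrix.det_zero_of_row_eq hij (M := Matrix.of fun (_ : σ) k => x k) rfl)
  refine ⟨_, inv_sqrt_smul_mem_tangentSphere hu ?_⟩
  simpa [Matrix.mulVec, dotProduct, mul_comm] using congrFun hMu i

theorem isCompact_tangentSphere (x : σ → ℝ) : IsCompact (tangentSphere x) := by
  refine Metric.isCompact_of_isClosed_isBounded ?_ ?_
  · exact (isClosed_eq (by fun_prop) continuous_const).inter
      (isClosed_eq (by fun_prop) continuous_const)
  · refine (Metric.isBounded_closedBall (x := 0) (r := 1)).subset fun v hv => ?_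
    rw [mem_closedBall_zero_iff, pi_norm_le_iff_of_nonneg zero_le_one]
    intro k
    rw [Real.norm_eq_abs, ← sq_le_one_iff_abs_le_one]
    exact hv.2 ▸ Finset.single_le_sum (fun l _ => sq_nonneg (v l)) (Finset.mem_univ k)

end TangentSphere

section Jet

variable {m : ℕ} {x v : Fin m → ℝ} {d : ℕ}

theorem sum_mul_self_eq_one (hx : ∑ k, x k ^ 2 = 1) : ∑ k, x k * x k = 1 := by
  simpa only [sq] using hx

theorem eval_evalKernel_self (hx : ∑ k, x k ^ 2 = 1) : eval x (evalKernel x d) = 1 := by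
  rw [evalKernel, map_pow, eval_linearForm, sum_mul_self_eq_one hx, one_pow]

theorem dirDeriv_evalKernel_self (hx : ∑ k, x k ^ 2 = 1) (hv : v ∈ tangentSphere x) :
    dirDeriv (evalKernel x d) x v = 0 := by
  simp only [evalKernel, dirDeriv, pderiv_pow, pderiv_linearForm, map_mul, map_pow, map_natCast,
    eval_C, eval_linearForm, sum_mul_self_eq_one hx, one_pow, mul_assoc, ← Finset.mul_sum]
  simp only [mul_comm (x _), hv.1, mul_zero]

theorem dirDeriv_derivKernel_self (hx : ∑ k, x k ^ 2 = 1) (hv : v ∈ tangentSphere x) :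
    dirDeriv (derivKernel x v d) x v = 1 := by
  simp only [derivKernel, dirDeriv, Derivation.leibniz, pderiv_linearForm, smul_eq_mul, map_add,
    map_mul, map_pow, eval_C, eval_linearForm, sum_mul_self_eq_one hx, one_pow, one_mul, hv.1,
    zero_mul, add_zero]
  simpa only [sq] using hv.2

theorem bwInner_evalKernel_self (hx : ∑ k, x k ^ 2 = 1) :
    bwInner (evalKernel x d) (evalKernel x d) = 1 := by
  rw [bwInner_evalKernel (isHomogeneous_evalKernel x d), eval_evalKernel_self hx]

theorem bwInner_evalKernel_derivKernel (hd : d ≠ 0) (hx : ∑ k, x k ^ 2 = 1)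
    (hv : v ∈ tangentSphere x) : bwInner (evalKernel x d) (derivKernel x v d) = 0 := by
  rw [bwInner_derivKernel hd (isHomogeneous_evalKernel x d), dirDeriv_evalKernel_self hx hv,
    zero_div]

theorem bwInner_derivKernel_self (hd : d ≠ 0) (hx : ∑ k, x k ^ 2 = 1)
    (hv : v ∈ tangentSphere x) : bwInner (derivKernel x v d) (derivKernel x v d) = 1 / d := by
  rw [bwInner_derivKernel hd (isHomogeneous_derivKernel x v hd), dirDeriv_derivKernel_self hx hv]

theorem sq_eval_add_sq_dirDeriv_div_le_bwInner (hd : d ≠ 0) (hx : ∑ k, x k ^ 2 = 1)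
    (hv : v ∈ tangentSphere x) {h : MvPolynomial (Fin m) ℝ} (hh : h.IsHomogeneous d) :
    eval x h ^ 2 + dirDeriv h x v ^ 2 / d ≤ bwInner h h := by
  have hQQ := bwInner_derivKernel_self hd hx hv
  have := bwForm.sq_apply_add_sq_apply_div_le bwForm_isSymm bwInner_self_nonneg
    (bwInner_evalKernel_self hx) (bwInner_evalKernel_derivKernel hd hx hv)
    (by rw [bwForm_apply, hQQ]; positivity) h
  rw [bwForm_apply, bwForm_apply, bwForm_apply, bwForm_apply, hQQ, bwInner_evalKernel hh,
    bwInner_derivKernel hd hh] at this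
  convert this using 2
  field_simp

noncomputable def jetPoly (x v : Fin m → ℝ) (d : ℕ) (a b : ℝ) : MvPolynomial (Fin m) ℝ :=
  a • evalKernel x d + b • derivKernel x v d

theorem isHomogeneous_jetPoly (hd : d ≠ 0) (a b : ℝ) : (jetPoly x v d a b).IsHomogeneous d := by
  rw [jetPoly, smul_eq_C_mul, smul_eq_C_mul]
  exact ((isHomogeneous_evalKernel x d).C_mul a).add ((isHomogeneous_derivKernel x v hd).C_mul b)

theorem eval_jetPoly (hd : d ≠ 0) (hx : ∑ k, x k ^ 2 = 1) (hv : v ∈ tangentSphere x) (a b : ℝ) :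
    eval x (jetPoly x v d a b) = a := by
  rw [← bwInner_evalKernel (isHomogeneous_jetPoly hd a b), jetPoly, bwInner_add_left,
    bwInner_smul_left, bwInner_smul_left, bwInner_evalKernel_self hx, bwInner_comm,
    bwInner_evalKernel_derivKernel hd hx hv, mul_one, mul_zero, add_zero]

theorem dirDeriv_jetPoly (hd : d ≠ 0) (hx : ∑ k, x k ^ 2 = 1) (hv : v ∈ tangentSphere x)
    (a b : ℝ) : dirDeriv (jetPoly x v d a b) x v = b := by
  rw [← degree_mul_bwInner_derivKernel (isHomogeneous_jetPoly hd a b)]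
  rw [jetPoly, bwInner_add_left, bwInner_smul_left, bwInner_smul_left,
    bwInner_evalKernel_derivKernel hd hx hv, bwInner_derivKernel_self hd hx hv, mul_zero, zero_add]
  field_simp

theorem bwInner_jetPoly_self (hd : d ≠ 0) (hx : ∑ k, x k ^ 2 = 1) (hv : v ∈ tangentSphere x)
    (a b : ℝ) : bwInner (jetPoly x v d a b) (jetPoly x v d a b) = a ^ 2 + b ^ 2 / d := by
  rw [jetPoly, ← bwForm_apply, bwForm.apply_smul_add_smul_self bwForm_isSymm
    (bwInner_evalKernel_self hx) (bwInner_evalKernel_derivKernel hd hx hv), bwForm_apply,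
    bwInner_derivKernel_self hd hx hv, mul_one_div]

end Jet

section Systems

variable {n : ℕ} {d : Fin n → ℕ} {f : Fin n → MvPolynomial (Fin (n + 1)) ℝ}
  {x : Fin (n + 1) → ℝ}

noncomputable def scaledDerivNorm (d : Fin n → ℕ) (f : Fin n → MvPolynomial (Fin (n + 1)) ℝ)
    (x v : Fin (n + 1) → ℝ) : ℝ :=
  Real.sqrt (∑ i, (dirDeriv (f i) x v / Real.sqrt (d i)) ^ 2)

theorem sq_scaledDerivNorm (v : Fin (n + 1) → ℝ) :
    scaledDerivNorm d f x v ^ 2 = ∑ i, dirDeriv (f i) x v ^ 2 / d i := by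
  rw [scaledDerivNorm, Real.sq_sqrt (Finset.sum_nonneg fun _ _ => sq_nonneg _)]
  simp only [div_pow, Real.sq_sqrt (Nat.cast_nonneg _)]

theorem sigmaMin_nonneg : 0 ≤ sigmaMin d f x :=
  Real.sInf_nonneg (by rintro _ ⟨v, -, rfl⟩; exact Real.sqrt_nonneg _)

theorem sigmaMin_le_scaledDerivNorm {v : Fin (n + 1) → ℝ} (hv : v ∈ tangentSphere x) :
    sigmaMin d f x ≤ scaledDerivNorm d f x v :=
  csInf_le ⟨0, by rintro _ ⟨w, -, rfl⟩; exact Real.sqrt_nonneg _⟩ ⟨v, hv, rfl⟩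

theorem exists_scaledDerivNorm_eq_sigmaMin (hn : 1 ≤ n) (d : Fin n → ℕ)
    (f : Fin n → MvPolynomial (Fin (n + 1)) ℝ) (x : Fin (n + 1) → ℝ) :
    ∃ v ∈ tangentSphere x, scaledDerivNorm d f x v = sigmaMin d f x := by
  have hcont : Continuous (scaledDerivNorm d f x) := by
    unfold scaledDerivNorm dirDeriv
    fun_prop
  exact ((isCompact_tangentSphere x).image hcont).sInf_mem
    ((tangentSphere_nonempty (by rw [Fintype.card_fin]; omega) x).image _)

theorem exists_mem_sigmaRx_bwNormSys_sub_eq (hd : ∀ i, d i ≠ 0) (hx : x ∈ unitSphere n)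
    (hf : IsSystem d f) {v : Fin (n + 1) → ℝ} (hv : v ∈ tangentSphere x) :
    ∃ g ∈ SigmaRx d x, bwNormSys (f - g) =
      Real.sqrt (scaledDerivNorm d f x v ^ 2 + ∑ i, eval x (f i) ^ 2) := by
  set jet := fun i => jetPoly x v (d i) (eval x (f i)) (dirDeriv (f i) x v)
  have hv0 : v ≠ 0 := by
    rintro rfl
    simpa using hv.2
  refine ⟨f - jet, ⟨fun i => (hf i).sub (isHomogeneous_jetPoly (hd i) _ _), fun i => ?_,
    v, hv0, hv.1, fun i => ?_⟩, ?_⟩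
  · rw [Pi.sub_apply, map_sub, eval_jetPoly (hd i) hx hv, sub_self]
  · rw [Pi.sub_apply, ← dirDeriv, dirDeriv_sub, dirDeriv_jetPoly (hd i) hx hv, sub_self]
  · rw [sub_sub_cancel f jet, bwNormSys, sq_scaledDerivNorm, ← Finset.sum_add_distrib]
    simp only [jet, bwInner_jetPoly_self (hd _) hx hv, add_comm]

theorem sqrt_sigmaMin_sq_add_le_bwNormSys_sub (hd : ∀ i, d i ≠ 0) (hx : x ∈ unitSphere n)
    (hf : IsSystem d f) {g : Fin n → MvPolynomial (Fin (n + 1)) ℝ} (hg : g ∈ SigmaRx d x) :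
    Real.sqrt (sigmaMin d f x ^ 2 + ∑ i, eval x (f i) ^ 2) ≤ bwNormSys (f - g) := by
  obtain ⟨hgsys, hgx, u, hu0, hux, hgu⟩ := hg
  have hv := inv_sqrt_smul_mem_tangentSphere hu0 hux
  set v := (Real.sqrt (∑ k, u k ^ 2))⁻¹ • u
  have hgv : ∀ i, dirDeriv (g i) x v = 0 := fun i => by
    rw [dirDeriv_smul_right, dirDeriv, hgu i, mul_zero]
  have hbessel : ∀ i, eval x (f i) ^ 2 + dirDeriv (f i) x v ^ 2 / d i
      ≤ bwInner (f i - g i) (f i - g i) := fun i => by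
    simpa only [map_sub, hgx i, sub_zero, dirDeriv_sub, hgv i] using
      sq_eval_add_sq_dirDeriv_div_le_bwInner (hd i) hx hv ((hf i).sub (hgsys i))
  refine Real.sqrt_le_sqrt ?_
  calc sigmaMin d f x ^ 2 + ∑ i, eval x (f i) ^ 2
      ≤ ∑ i, (eval x (f i) ^ 2 + dirDeriv (f i) x v ^ 2 / d i) := by
        rw [Finset.sum_add_distrib, ← sq_scaledDerivNorm, add_comm]
        gcongr
        exacts [sigmaMin_nonneg, sigmaMin_le_scaledDerivNorm hv]
    _ ≤ ∑ i, bwInner ((f - g) i) ((f - g) i) := Finset.sum_le_sum fun i _ => hbessel i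

theorem bwDist_sigmaRx_eq (hn : 1 ≤ n) (hd : ∀ i, d i ≠ 0) (hx : x ∈ unitSphere n)
    (hf : IsSystem d f) :
    bwDist f (SigmaRx d x) = Real.sqrt (sigmaMin d f x ^ 2 + ∑ i, eval x (f i) ^ 2) := by
  obtain ⟨v, hv, hvmin⟩ := exists_scaledDerivNorm_eq_sigmaMin hn d f x
  obtain ⟨g, hg, hfg⟩ := exists_mem_sigmaRx_bwNormSys_sub_eq hd hx hf hv
  rw [hvmin] at hfg
  apply le_antisymm
  · exact hfg ▸ csInf_le ⟨0, by rintro _ ⟨g', -, rfl⟩; exact Real.sqrt_nonneg _⟩ ⟨g, hg, rfl⟩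
  · refine le_csInf ⟨_, g, hg, rfl⟩ ?_
    rintro _ ⟨g', hg', rfl⟩
    exact sqrt_sigmaMin_sq_add_le_bwNormSys_sub hd hx hf hg'

end Systems

/-- For every `x ∈ Sⁿ` and every `f ∈ H_d` with `‖f‖_W = 1`,
`κ̃(f, x) = 1 / dist(f, Σ_ℝ(x))`. -/
theorem kappaAt_eq_inv_dist_sigmaRx {n : ℕ} (hn : 1 ≤ n) (d : Fin n → ℕ)
    (hd : ∀ i, 1 ≤ d i) (x : Fin (n + 1) → ℝ) (hx : x ∈ unitSphere n)
    (f : Fin n → MvPolynomial (Fin (n + 1)) ℝ) (hf : IsSystem d f)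
    (hf1 : bwNormSys f = 1) :
    kappaAt d f x = 1 / ENNReal.ofReal (bwDist f (SigmaRx d x)) := by
  rw [kappaAt, hf1, ENNReal.ofReal_one,
    bwDist_sigmaRx_eq hn (fun i => Nat.one_le_iff_ne_zero.mp (hd i)) hx hf]
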